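/- arXiv:math/0606459 — 2 statements merged into one kernel-verified Lean document; each statement's English description precedes it below -/
import Mathlib

section
/- Let d ≥ 1 and p > d/2. There exists a constant c depending only on p and d such that for all w, z ∈ ℓ^p(Z^d), the convolution w ⋆ z defined by (w ⋆ z)_j = Σ_{k∈Z^d} w_{j-k} z_k satisfies ||w ⋆ z||_p ≤ c ||w||_p ||z||_p. -/
/-!
With the weight `a j = ⟨j⟩ ^ p`, the triangle inequality for `⟨·⟩` gives
`a j ≤ 2 ^ p (a (j - k) + a k)`, hence `a |w ⋆ z| ≤ 2 ^ p ((a |w|) ⋆ |z| + |w| ⋆ (a |z|))`.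
Young's inequality `‖F ⋆ h‖₂ ≤ ‖F‖₂ ‖h‖₁` bounds both terms, and Cauchy–Schwarz gives
`‖z‖₁ ≤ (∑ j, a j⁻²) ^ (1/2) ‖a z‖₂`, where `∑ j, ⟨j⟩ ^ (-2p) < ∞` precisely because `2p > d`.
All estimates are carried out in `ℝ≥0∞`, so that no summability has to be tracked along the way.
-/

open scoped ENNReal

/-- Euclidean norm of a lattice point in `ℤ^d`. -/
noncomputable def latNorm {d : ℕ} (j : Fin d → ℤ) : ℝ :=
  Real.sqrt (∑ i, ((j i : ℝ)) ^ 2)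

/-- Japanese bracket weight `⟨j⟩ = max(1, |j|)`. -/
noncomputable def bracket {d : ℕ} (j : Fin d → ℤ) : ℝ := max 1 (latNorm j)

/-- Weighted `ℓ^p`-norm `(Σ ⟨j⟩^{2p} |z_j|²)^{1/2}`. -/
noncomputable def wpNorm {d : ℕ} (p : ℝ) (z : (Fin d → ℤ) → ℂ) : ℝ :=
  Real.sqrt (∑' j : Fin d → ℤ, bracket j ^ (2 * p) * ‖z j‖ ^ 2)

/-- Convolution `(w ⋆ z)_j = Σ_k w_{j-k} z_k`. -/
noncomputable def latConv {d : ℕ} (w z : (Fin d → ℤ) → ℂ) : (Fin d → ℤ) → ℂ :=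
  fun j => ∑' k : Fin d → ℤ, w (j - k) * z k

namespace ENNReal

variable {ι : Type*}

lemma add_sq_le_two_mul (x y : ℝ≥0∞) : (x + y) ^ 2 ≤ 2 * (x ^ 2 + y ^ 2) := by
  have h := rpow_add_le_mul_rpow_add_rpow x y one_le_two
  rw [show (2 : ℝ) - 1 = 1 by norm_num, rpow_one] at h
  exact_mod_cast h

lemma rpow_two_inv_sq (x : ℝ≥0∞) : (x ^ (2⁻¹ : ℝ)) ^ 2 = x := by
  exact_mod_cast rpow_inv_natCast_pow two_ne_zero x

lemma tsum_mul_sq_le (f g : ι → ℝ≥0∞) :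
    (∑' i, f i * g i) ^ 2 ≤ (∑' i, f i ^ 2) * ∑' i, g i ^ 2 := by
  let _ : MeasurableSpace ι := ⊤
  have h := lintegral_mul_le_Lp_mul_Lq MeasureTheory.Measure.count Real.HolderConjugate.two_two
    measurable_from_top.aemeasurable measurable_from_top.aemeasurable (f := f) (g := g)
  simp only [MeasureTheory.lintegral_count, Pi.mul_apply, rpow_ofNat, one_div] at h
  calc (∑' i, f i * g i) ^ 2
      ≤ ((∑' i, f i ^ 2) ^ (2⁻¹ : ℝ) * (∑' i, g i ^ 2) ^ (2⁻¹ : ℝ)) ^ 2 := by gcongr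
    _ = (∑' i, f i ^ 2) * ∑' i, g i ^ 2 := by rw [mul_pow, rpow_two_inv_sq, rpow_two_inv_sq]

lemma tsum_mul_sq_le_tsum_sq_mul_mul_tsum (f w : ι → ℝ≥0∞) :
    (∑' i, f i * w i) ^ 2 ≤ (∑' i, f i ^ 2 * w i) * ∑' i, w i := by
  have h := tsum_mul_sq_le (fun i => f i * w i ^ (2⁻¹ : ℝ)) (fun i => w i ^ (2⁻¹ : ℝ))
  simp only [mul_pow, mul_assoc, ← sq, rpow_two_inv_sq] at h
  exact h

lemma tsum_sq_le_tsum_inv_sq_mul {a : ι → ℝ≥0∞} (ha₀ : ∀ i, a i ≠ 0) (ha : ∀ i, a i ≠ ∞)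
    (v : ι → ℝ≥0∞) : (∑' i, v i) ^ 2 ≤ (∑' i, (a i)⁻¹ ^ 2) * ∑' i, (a i * v i) ^ 2 := by
  have hv : ∀ i, v i = (a i)⁻¹ * (a i * v i) := fun i => by
    rw [← mul_assoc, ENNReal.inv_mul_cancel (ha₀ i) (ha i), one_mul]
  simpa only [← hv] using tsum_mul_sq_le (fun i => (a i)⁻¹) fun i => a i * v i

lemma tsum_fin_pi_prod (G : ι → ℝ≥0∞) :
    ∀ d : ℕ, ∑' j : Fin d → ι, ∏ i, G (j i) = (∑' n, G n) ^ d
  | 0 => by simp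
  | d + 1 => by
    rw [← (Fin.consEquiv fun _ => ι).tsum_eq, ENNReal.tsum_prod', pow_succ',
      ← tsum_fin_pi_prod G d, ← ENNReal.tsum_mul_right]
    simp [Fin.consEquiv, Fin.prod_univ_succ, ENNReal.tsum_mul_left]

variable [AddCommGroup ι]

lemma tsum_conv_sq_le (F h : ι → ℝ≥0∞) :
    ∑' j, (∑' k, F (j - k) * h k) ^ 2 ≤ (∑' k, F k ^ 2) * (∑' k, h k) ^ 2 := calc
  ∑' j, (∑' k, F (j - k) * h k) ^ 2
      ≤ ∑' j, (∑' k, F (j - k) ^ 2 * h k) * ∑' k, h k :=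
    ENNReal.tsum_le_tsum fun j => tsum_mul_sq_le_tsum_sq_mul_mul_tsum _ _
  _ = (∑' k, (∑' j, F (j - k) ^ 2) * h k) * ∑' k, h k := by
    rw [ENNReal.tsum_mul_right, ENNReal.tsum_comm]
    simp_rw [ENNReal.tsum_mul_right]
  _ = (∑' k, F k ^ 2) * (∑' k, h k) ^ 2 := by
    have hshift : ∀ k, ∑' j, F (j - k) ^ 2 = ∑' m, F m ^ 2 := fun k =>
      (Equiv.subRight k).tsum_eq fun m => F m ^ 2
    simp_rw [hshift, ENNReal.tsum_mul_left]
    ring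

lemma tsum_weighted_conv_sq_le {a : ι → ℝ≥0∞} {C : ℝ≥0∞}
    (ha₀ : ∀ i, a i ≠ 0) (ha : ∀ i, a i ≠ ∞) (hC : ∀ j k, a j ≤ C * (a (j - k) + a k))
    (W Z : ι → ℝ≥0∞) :
    ∑' j, (a j * ∑' k, W (j - k) * Z k) ^ 2 ≤
      4 * C ^ 2 * (∑' i, (a i)⁻¹ ^ 2) * (∑' i, (a i * W i) ^ 2) * ∑' i, (a i * Z i) ^ 2 := by
  set S := ∑' i, (a i)⁻¹ ^ 2
  set G₁ : ι → ℝ≥0∞ := fun j => ∑' k, (a (j - k) * W (j - k)) * Z k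
  set G₂ : ι → ℝ≥0∞ := fun j => ∑' k, (a (j - k) * Z (j - k)) * W k
  have hsplit : ∀ j, a j * ∑' k, W (j - k) * Z k ≤ C * (G₁ j + G₂ j) := fun j => calc
    a j * ∑' k, W (j - k) * Z k ≤ ∑' k, C * (a (j - k) + a k) * (W (j - k) * Z k) := by
      rw [← ENNReal.tsum_mul_left]
      exact ENNReal.tsum_le_tsum fun k => by gcongr; exact hC j k
    _ = C * (G₁ j + ∑' k, (a k * Z k) * W (j - k)) := by
      rw [← ENNReal.tsum_add, ← ENNReal.tsum_mul_left]
      exact tsum_congr fun k => by ring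
    _ = C * (G₁ j + G₂ j) := by
      congr 2
      exact ((Equiv.subLeft j).tsum_eq _).symm.trans (tsum_congr fun k => by simp)
  calc ∑' j, (a j * ∑' k, W (j - k) * Z k) ^ 2
      ≤ ∑' j, C ^ 2 * (2 * (G₁ j ^ 2 + G₂ j ^ 2)) := ENNReal.tsum_le_tsum fun j => by
        calc (a j * ∑' k, W (j - k) * Z k) ^ 2 ≤ (C * (G₁ j + G₂ j)) ^ 2 :=
              pow_le_pow_left₀ zero_le (hsplit j) 2
          _ ≤ C ^ 2 * (2 * (G₁ j ^ 2 + G₂ j ^ 2)) := by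
              rw [mul_pow]; gcongr; exact add_sq_le_two_mul _ _
    _ = C ^ 2 * 2 * (∑' j, G₁ j ^ 2 + ∑' j, G₂ j ^ 2) := by
      rw [ENNReal.tsum_mul_left, ENNReal.tsum_mul_left, ENNReal.tsum_add, mul_assoc]
    _ ≤ C ^ 2 * 2 * ((∑' i, (a i * W i) ^ 2) * (∑' i, Z i) ^ 2 +
          (∑' i, (a i * Z i) ^ 2) * (∑' i, W i) ^ 2) := by
      gcongr
      · exact tsum_conv_sq_le (fun i => a i * W i) Z
      · exact tsum_conv_sq_le (fun i => a i * Z i) W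
    _ ≤ C ^ 2 * 2 * ((∑' i, (a i * W i) ^ 2) * (S * ∑' i, (a i * Z i) ^ 2) +
          (∑' i, (a i * Z i) ^ 2) * (S * ∑' i, (a i * W i) ^ 2)) := by
      gcongr <;> exact tsum_sq_le_tsum_inv_sq_mul ha₀ ha _
    _ = _ := by ring

end ENNReal

lemma summable_iff_tsum_ofReal_ne_top {α : Type*} {f : α → ℝ} (hf : ∀ i, 0 ≤ f i) :
    Summable f ↔ ∑' i, ENNReal.ofReal (f i) ≠ ∞ := by
  refine ⟨Summable.tsum_ofReal_ne_top, fun h => ?_⟩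
  simpa only [ENNReal.toReal_ofReal (hf _)] using ENNReal.summable_toReal h

lemma tsum_eq_toReal_tsum_ofReal {α : Type*} {f : α → ℝ} (hf : ∀ i, 0 ≤ f i) :
    ∑' i, f i = (∑' i, ENNReal.ofReal (f i)).toReal := by
  rw [ENNReal.tsum_toReal_eq fun _ => ENNReal.ofReal_ne_top]
  simp only [ENNReal.toReal_ofReal (hf _)]

lemma summable_max_one_abs_int_rpow_neg {s : ℝ} (hs : 1 < s) :
    Summable fun n : ℤ => max 1 |(n : ℝ)| ^ (-s) := by
  refine (Real.summable_abs_int_rpow hs).congr_cofinite ?_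
  filter_upwards [Filter.eventually_cofinite_ne 0] with n hn
  rw [max_eq_right]
  exact_mod_cast Int.one_le_abs hn

section Lattice

variable {d : ℕ}

lemma latNorm_eq_norm (j : Fin d → ℤ) :
    latNorm j = ‖(WithLp.toLp 2 fun i => (j i : ℝ) : EuclideanSpace ℝ (Fin d))‖ := by
  simp [EuclideanSpace.norm_eq, latNorm]

lemma latNorm_add_le (j k : Fin d → ℤ) : latNorm (j + k) ≤ latNorm j + latNorm k := by
  simp only [latNorm_eq_norm, Pi.add_apply, Int.cast_add]
  exact norm_add_le (WithLp.toLp 2 fun i => (j i : ℝ) : EuclideanSpace ℝ (Fin d))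
    (WithLp.toLp 2 fun i => (k i : ℝ))

lemma abs_le_latNorm (j : Fin d → ℤ) (i : Fin d) : |(j i : ℝ)| ≤ latNorm j := by
  simpa [latNorm_eq_norm] using
    PiLp.norm_apply_le (WithLp.toLp 2 fun i => (j i : ℝ) : EuclideanSpace ℝ (Fin d)) i

lemma one_le_bracket (j : Fin d → ℤ) : 1 ≤ bracket j := le_max_left _ _

lemma bracket_pos (j : Fin d → ℤ) : 0 < bracket j := one_pos.trans_le (one_le_bracket j)

lemma bracket_add_le (j k : Fin d → ℤ) : bracket (j + k) ≤ bracket j + bracket k :=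
  max_le (by linarith [one_le_bracket j, one_le_bracket k]) <|
    (latNorm_add_le j k).trans (add_le_add (le_max_right _ _) (le_max_right _ _))

lemma ofReal_bracket_rpow_le {p : ℝ} (hp : 0 ≤ p) (j k : Fin d → ℤ) :
    ENNReal.ofReal (bracket j) ^ p ≤
      2 ^ p * (ENNReal.ofReal (bracket (j - k)) ^ p + ENNReal.ofReal (bracket k) ^ p) := calc
  _ ≤ (ENNReal.ofReal (bracket (j - k)) + ENNReal.ofReal (bracket k)) ^ p := by
    rw [← ENNReal.ofReal_add (bracket_pos _).le (bracket_pos _).le]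
    gcongr
    simpa using bracket_add_le (j - k) k
  _ ≤ _ := ENNReal.add_rpow_le_two_rpow_mul_rpow_add_rpow _ _ hp

lemma prod_max_one_abs_le_bracket_pow (j : Fin d → ℤ) :
    ∏ i, max 1 |(j i : ℝ)| ≤ bracket j ^ d := calc
  ∏ i, max 1 |(j i : ℝ)| ≤ ∏ _i : Fin d, bracket j :=
    Finset.prod_le_prod (fun i _ => by positivity)
      fun i _ => max_le_max le_rfl (abs_le_latNorm j i)
  _ = bracket j ^ d := by simp

lemma bracket_rpow_neg_le_prod {r : ℝ} (hr : 0 ≤ r) (hd : d ≠ 0) (j : Fin d → ℤ) :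
    bracket j ^ (-r) ≤ ∏ i, max 1 |(j i : ℝ)| ^ (-(r / d)) := calc
  bracket j ^ (-r) = (bracket j ^ d) ^ (-(r / d)) := by
    rw [← Real.rpow_natCast, ← Real.rpow_mul (bracket_pos j).le]
    field_simp
  _ ≤ (∏ i, max 1 |(j i : ℝ)|) ^ (-(r / d)) :=
    Real.rpow_le_rpow_of_nonpos (Finset.prod_pos fun i _ => by positivity)
      (prod_max_one_abs_le_bracket_pow j) (by simp; positivity)
  _ = ∏ i, max 1 |(j i : ℝ)| ^ (-(r / d)) :=
    (Real.finsetProd_rpow _ _ (fun i _ => by positivity) _).symm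

lemma tsum_ofReal_bracket_rpow_neg_ne_top {r : ℝ} (hr : d < r) :
    ∑' j : Fin d → ℤ, ENNReal.ofReal (bracket j ^ (-r)) ≠ ∞ := by
  rcases Nat.eq_zero_or_pos d with rfl | hd
  · simp
  have hr₀ : 0 ≤ r := by linarith [(Nat.cast_nonneg d : (0 : ℝ) ≤ d)]
  have hpoint : ∀ j : Fin d → ℤ, ENNReal.ofReal (bracket j ^ (-r)) ≤
      ∏ i, ENNReal.ofReal (max 1 |(j i : ℝ)| ^ (-(r / d))) := fun j => by
    rw [← ENNReal.ofReal_prod_of_nonneg fun i _ => by positivity]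
    exact ENNReal.ofReal_le_ofReal (bracket_rpow_neg_le_prod hr₀ hd.ne' j)
  refine ne_top_of_le_ne_top ?_ (ENNReal.tsum_le_tsum hpoint)
  rw [ENNReal.tsum_fin_pi_prod (fun n : ℤ => ENNReal.ofReal (max 1 |(n : ℝ)| ^ (-(r / d))))]
  refine ENNReal.pow_ne_top (summable_max_one_abs_int_rpow_neg ?_).tsum_ofReal_ne_top
  rwa [one_lt_div (by exact_mod_cast hd)]

end Lattice

noncomputable def wpENormSq {d : ℕ} (p : ℝ) (z : (Fin d → ℤ) → ℂ) : ℝ≥0∞ :=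
  ∑' j, (ENNReal.ofReal (bracket j) ^ p * ‖z j‖ₑ) ^ 2

section WeightedNorm

variable {d : ℕ} {p : ℝ}

lemma ofReal_bracket_rpow_mul_sq (z : (Fin d → ℤ) → ℂ) (j : Fin d → ℤ) :
    ENNReal.ofReal (bracket j ^ (2 * p) * ‖z j‖ ^ 2) =
      (ENNReal.ofReal (bracket j) ^ p * ‖z j‖ₑ) ^ 2 := by
  rw [ENNReal.ofReal_mul (by positivity [bracket_pos j]),
    ← ENNReal.ofReal_rpow_of_pos (bracket_pos j), ENNReal.ofReal_pow (norm_nonneg _), ofReal_norm,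
    mul_pow, mul_comm 2 p, ENNReal.rpow_mul, ENNReal.rpow_ofNat]

lemma summable_iff_wpENormSq_ne_top (z : (Fin d → ℤ) → ℂ) :
    Summable (fun j => bracket j ^ (2 * p) * ‖z j‖ ^ 2) ↔ wpENormSq p z ≠ ∞ := by
  rw [summable_iff_tsum_ofReal_ne_top fun j => by positivity [bracket_pos j], wpENormSq]
  simp only [ofReal_bracket_rpow_mul_sq]

lemma wpNorm_eq_sqrt_toReal (z : (Fin d → ℤ) → ℂ) :
    wpNorm p z = √(wpENormSq p z).toReal := by
  rw [wpNorm, tsum_eq_toReal_tsum_ofReal fun j => by positivity [bracket_pos j], wpENormSq]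
  simp only [ofReal_bracket_rpow_mul_sq]

lemma wpENormSq_latConv_le (hp : 0 ≤ p) (w z : (Fin d → ℤ) → ℂ) :
    wpENormSq p (latConv w z) ≤
      4 * (2 ^ p) ^ 2 * (∑' j : Fin d → ℤ, ENNReal.ofReal (bracket j ^ (-(2 * p)))) *
        wpENormSq p w * wpENormSq p z := by
  have ha₀ (j : Fin d → ℤ) : ENNReal.ofReal (bracket j) ^ p ≠ 0 := by simp [bracket_pos j]
  have ha (j : Fin d → ℤ) : ENNReal.ofReal (bracket j) ^ p ≠ ∞ :=
    ENNReal.rpow_ne_top_of_nonneg hp ENNReal.ofReal_ne_top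
  have hinv (j : Fin d → ℤ) :
      (ENNReal.ofReal (bracket j) ^ p)⁻¹ ^ 2 = ENNReal.ofReal (bracket j ^ (-(2 * p))) := by
    rw [← ENNReal.ofReal_rpow_of_pos (bracket_pos j), ← ENNReal.rpow_neg, ← ENNReal.rpow_ofNat,
      ← ENNReal.rpow_mul]
    ring_nf
  have hconv (j : Fin d → ℤ) : ‖latConv w z j‖ₑ ≤ ∑' k, ‖w (j - k)‖ₑ * ‖z k‖ₑ := by
    simpa only [latConv, enorm_mul] using
      enorm_tsum_le_tsum_enorm (f := fun k => w (j - k) * z k)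
  calc wpENormSq p (latConv w z)
      ≤ ∑' j, (ENNReal.ofReal (bracket j) ^ p * ∑' k, ‖w (j - k)‖ₑ * ‖z k‖ₑ) ^ 2 :=
        ENNReal.tsum_le_tsum fun j => by gcongr; exact hconv j
    _ ≤ 4 * (2 ^ p) ^ 2 * (∑' j, (ENNReal.ofReal (bracket j) ^ p)⁻¹ ^ 2) *
          wpENormSq p w * wpENormSq p z :=
        ENNReal.tsum_weighted_conv_sq_le ha₀ ha (ofReal_bracket_rpow_le hp) _ _
    _ = _ := by rw [tsum_congr hinv]

end WeightedNorm

theorem stmt2_general (d : ℕ) (p : ℝ) (hp : (d : ℝ) / 2 < p) :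
    ∃ c : ℝ, 0 < c ∧ ∀ w z : (Fin d → ℤ) → ℂ,
      Summable (fun j : Fin d → ℤ => bracket j ^ (2 * p) * ‖w j‖ ^ 2) →
      Summable (fun j : Fin d → ℤ => bracket j ^ (2 * p) * ‖z j‖ ^ 2) →
      Summable (fun j : Fin d → ℤ => bracket j ^ (2 * p) * ‖latConv w z j‖ ^ 2) ∧
      wpNorm p (latConv w z) ≤ c * wpNorm p w * wpNorm p z := by
  have hp₀ : 0 ≤ p := by linarith [(by positivity : (0 : ℝ) ≤ d / 2)]
  set K : ℝ≥0∞ := 4 * (2 ^ p) ^ 2 * ∑' j : Fin d → ℤ, ENNReal.ofReal (bracket j ^ (-(2 * p)))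
  have h2p : (2 : ℝ≥0∞) ^ p ≠ ∞ := ENNReal.rpow_ne_top_of_nonneg hp₀ ENNReal.ofNat_ne_top
  have hK : K ≠ ∞ :=
    ENNReal.mul_ne_top (by finiteness) (tsum_ofReal_bracket_rpow_neg_ne_top (by linarith))
  refine ⟨max 1 √K.toReal, by positivity, fun w z hw hz => ?_⟩
  rw [summable_iff_wpENormSq_ne_top] at hw hz ⊢
  have hconv : wpENormSq p (latConv w z) ≤ K * wpENormSq p w * wpENormSq p z :=
    wpENormSq_latConv_le hp₀ w z
  have hfin : K * wpENormSq p w * wpENormSq p z ≠ ∞ := by finiteness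
  refine ⟨ne_top_of_le_ne_top hfin hconv, ?_⟩
  simp only [wpNorm_eq_sqrt_toReal]
  calc √(wpENormSq p (latConv w z)).toReal ≤ √(K * wpENormSq p w * wpENormSq p z).toReal :=
        Real.sqrt_le_sqrt (ENNReal.toReal_mono hfin hconv)
    _ = √K.toReal * √(wpENormSq p w).toReal * √(wpENormSq p z).toReal := by
        simp only [ENNReal.toReal_mul, Real.sqrt_mul', ENNReal.toReal_nonneg]
    _ ≤ max 1 √K.toReal * √(wpENormSq p w).toReal * √(wpENormSq p z).toReal := by
        gcongr; exact le_max_right _ _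

/-- for `p > d/2` the weighted space `ℓ^p(ℤ^d)` is a Banach algebra
under convolution: `||w ⋆ z||_p ≤ c ||w||_p ||z||_p`. -/
theorem stmt2 (d : ℕ) (hd : 1 ≤ d) (p : ℝ) (hp : (d : ℝ) / 2 < p) :
    ∃ c : ℝ, 0 < c ∧ ∀ w z : (Fin d → ℤ) → ℂ,
      Summable (fun j : Fin d → ℤ => bracket j ^ (2 * p) * ‖w j‖ ^ 2) →
      Summable (fun j : Fin d → ℤ => bracket j ^ (2 * p) * ‖z j‖ ^ 2) →
      Summable (fun j : Fin d → ℤ => bracket j ^ (2 * p) * ‖latConv w z j‖ ^ 2) ∧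
      wpNorm p (latConv w z) ≤ c * wpNorm p w * wpNorm p z :=
  stmt2_general d p hp
end

section
/- Let ω ∈ ℝ^n satisfy the Diophantine-type condition |(k,ω)| ≥ α/K^{n+1} for all k ∈ Z^n with 0 < |k| ≤ K. Let g(x) = Σ_{0<|k|≤K} ĝ(k) e^{i(k,x)} be a trigonometric polynomial bounded by M on the strip D(s) = {|Im x| < s}. Then the unique solution F with F̂(0)=0 of (ω,∂_x)F = g, namely F(x) = Σ_{0<|k|≤K} ĝ(k)/(i(k,ω)) e^{i(k,x)}, satisfies sup_{D(s')} |F| ≤ C α^{-1} K^{n+1} M Σ_{k∈Z^n} e^{-(s-s')|k|} for 0 < s' < s, with C depending only on n. -/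
/-- ℓ¹ norm of a lattice point `k ∈ ℤ^n`. -/
noncomputable def l1norm {n : ℕ} (k : Fin n → ℤ) : ℝ := ∑ i, |(k i : ℝ)|

/-! On `D(s')` the mode `e^{i(k,x)}` is bounded by `e^{s'|k|}` and the small divisor costs at most
the factor `K^{n+1}/α`, so with `|ĝ(k)| ≤ M e^{-s|k|}` the `k`-th term of `F` is at most
`α⁻¹ K^{n+1} M e^{-(s-s')|k|}` on `D(s')`; summing over `k` gives the estimate with `C = 1`. -/

theorem summable_exp_neg_mul_abs_int {t : ℝ} (ht : 0 < t) :
    Summable fun k : ℤ => Real.exp (-t * |(k : ℝ)|) := by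
  have hnat : Summable fun m : ℕ => Real.exp (m * -t) :=
    Real.summable_exp_nat_mul_iff.mpr (neg_lt_zero.mpr ht)
  refine summable_int_iff_summable_nat_and_neg.mpr ⟨?_, ?_⟩ <;>
    refine hnat.congr fun m => ?_ <;> simp [mul_comm]

theorem summable_pi_prod_of_nonneg {ι : Type*} {f : ι → ℝ} (hf₀ : 0 ≤ f) (hf : Summable f) :
    ∀ n : ℕ, Summable fun k : Fin n → ι => ∏ i, f (k i)
  | 0 => .of_finite
  | n + 1 => by
    have hprod := hf.mul_of_nonneg (summable_pi_prod_of_nonneg hf₀ hf n) hf₀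
      fun _ => Finset.prod_nonneg fun i _ => hf₀ _
    refine (hprod.comp_injective (Fin.consEquiv fun _ => ι).symm.injective).congr fun k => ?_
    simp [Fin.prod_univ_succ, Fin.tail]

theorem summable_exp_neg_mul_l1norm (n : ℕ) {t : ℝ} (ht : 0 < t) :
    Summable fun k : Fin n → ℤ => Real.exp (-t * l1norm k) := by
  refine (summable_pi_prod_of_nonneg (fun _ => (Real.exp_pos _).le)
    (summable_exp_neg_mul_abs_int ht) n).congr fun k => ?_
  rw [l1norm, Finset.mul_sum, Real.exp_sum]

open Complex

theorem norm_cexp_I_mul_sum_le {n : ℕ} (k : Fin n → ℤ) (x : Fin n → ℂ) {σ : ℝ}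
    (hx : ∀ i, |(x i).im| ≤ σ) :
    ‖cexp (I * ∑ i, (k i : ℂ) * x i)‖ ≤ Real.exp (σ * l1norm k) := by
  rw [norm_exp, Real.exp_le_exp]
  calc (I * ∑ i, (k i : ℂ) * x i).re = ∑ i, -((k i : ℝ) * (x i).im) := by simp
    _ ≤ ∑ i, σ * |(k i : ℝ)| := Finset.sum_le_sum fun i _ => by
        calc -((k i : ℝ) * (x i).im) ≤ |(k i : ℝ)| * |(x i).im| := by
              rw [← abs_mul]; exact neg_le_abs _
          _ ≤ σ * |(k i : ℝ)| := by rw [mul_comm σ]; gcongr; exact hx i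
    _ = σ * l1norm k := by rw [l1norm, Finset.mul_sum]

theorem norm_div_I_mul_ofReal_le (z : ℂ) {r c : ℝ} (hc : 0 < c) (hr : c ≤ |r|) :
    ‖z / (I * r)‖ ≤ ‖z‖ / c := by
  rw [norm_div, norm_mul, norm_I, one_mul, norm_real, Real.norm_eq_abs]
  exact div_le_div_of_nonneg_left (norm_nonneg z) hc hr

/-- The `k`-th term of the Fourier series of the solution `F` of `(ω,∂_x)F = g` at `x`. -/
noncomputable def homologicalTerm {n : ℕ} (ω : Fin n → ℝ) (gh : (Fin n → ℤ) → ℂ)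
    (x : Fin n → ℂ) (k : Fin n → ℤ) : ℂ :=
  if k = 0 then 0 else
    gh k / (I * ∑ i, (k i : ℂ) * (ω i : ℂ)) * cexp (I * ∑ i, (k i : ℂ) * x i)

section SmallDivisor

variable {n : ℕ} {ω : Fin n → ℝ} {gh : (Fin n → ℤ) → ℂ} {x : Fin n → ℂ} {R c s s' M : ℝ}

theorem norm_homologicalTerm_le (hc : 0 < c) (hM : 0 ≤ M)
    (hdio : ∀ k : Fin n → ℤ, k ≠ 0 → l1norm k ≤ R → c ≤ |∑ i, (k i : ℝ) * ω i|)
    (hcoef : ∀ k, ‖gh k‖ ≤ M * Real.exp (-s * l1norm k))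
    (hsupp : ∀ k, R < l1norm k → gh k = 0) (hx : ∀ i, |(x i).im| ≤ s') (k : Fin n → ℤ) :
    ‖homologicalTerm ω gh x k‖ ≤ M / c * Real.exp (-(s - s') * l1norm k) := by
  unfold homologicalTerm
  split_ifs with hk0
  · rw [norm_zero]; positivity
  by_cases hkR : R < l1norm k
  · rw [hsupp k hkR, zero_div, zero_mul, norm_zero]; positivity
  have hdot : ∑ i, (k i : ℂ) * (ω i : ℂ) = ((∑ i, (k i : ℝ) * ω i : ℝ) : ℂ) := by push_cast; rfl
  rw [norm_mul, hdot]
  calc _ ≤ ‖gh k‖ / c * Real.exp (s' * l1norm k) :=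
        mul_le_mul (norm_div_I_mul_ofReal_le _ hc (hdio k hk0 (not_lt.mp hkR)))
          (norm_cexp_I_mul_sum_le k x hx) (norm_nonneg _) (by positivity)
    _ ≤ M * Real.exp (-s * l1norm k) / c * Real.exp (s' * l1norm k) := by
        gcongr; exact hcoef k
    _ = M / c * Real.exp (-(s - s') * l1norm k) := by
        rw [show -(s - s') * l1norm k = -s * l1norm k + s' * l1norm k by ring, Real.exp_add]
        ring

theorem norm_tsum_homologicalTerm_le (hc : 0 < c) (hM : 0 ≤ M)
    (hdio : ∀ k : Fin n → ℤ, k ≠ 0 → l1norm k ≤ R → c ≤ |∑ i, (k i : ℝ) * ω i|)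
    (hcoef : ∀ k, ‖gh k‖ ≤ M * Real.exp (-s * l1norm k))
    (hsupp : ∀ k, R < l1norm k → gh k = 0) (hx : ∀ i, |(x i).im| ≤ s') (hss' : s' < s) :
    ‖∑' k, homologicalTerm ω gh x k‖ ≤
      M / c * ∑' k : Fin n → ℤ, Real.exp (-(s - s') * l1norm k) :=
  tsum_of_norm_bounded ((summable_exp_neg_mul_l1norm n (sub_pos.mpr hss')).hasSum.mul_left _)
    (norm_homologicalTerm_le hc hM hdio hcoef hsupp hx)

end SmallDivisor

theorem stmt10_general (n : ℕ) :
    ∃ C : ℝ, 0 < C ∧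
      ∀ (K : ℕ) (α s s' M : ℝ) (ω : Fin n → ℝ) (gh : (Fin n → ℤ) → ℂ),
        0 < K → 0 < α → 0 < s' → s' < s → 0 ≤ M →
        (∀ k : Fin n → ℤ, k ≠ 0 → l1norm k ≤ K →
          α / (K : ℝ) ^ (n + 1) ≤ |∑ i, (k i : ℝ) * ω i|) →
        (∀ k : Fin n → ℤ, ‖gh k‖ ≤ M * Real.exp (-s * l1norm k)) →
        (∀ k : Fin n → ℤ, (k = 0 ∨ (K : ℝ) < l1norm k) → gh k = 0) →
        ∀ x : Fin n → ℂ, (∀ i, |(x i).im| < s') →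
          ‖(∑' k : Fin n → ℤ,
              if k = 0 then 0 else
                gh k / (Complex.I * ∑ i, (k i : ℂ) * (ω i : ℂ)) *
                  Complex.exp (Complex.I * ∑ i, (k i : ℂ) * x i))‖ ≤
            C * α⁻¹ * (K : ℝ) ^ (n + 1) * M *
              ∑' k : Fin n → ℤ, Real.exp (-(s - s') * l1norm k) := by
  refine ⟨1, one_pos, fun K α s s' M ω gh hK hα _ hss' hM hdio hcoef hsupp x hx => ?_⟩
  have hc : 0 < α / (K : ℝ) ^ (n + 1) := by positivity
  have hconst : 1 * α⁻¹ * (K : ℝ) ^ (n + 1) * M = M / (α / (K : ℝ) ^ (n + 1)) := by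
    field_simp
  rw [hconst]
  exact norm_tsum_homologicalTerm_le hc hM hdio hcoef (fun k hk => hsupp k (Or.inr hk))
    (fun i => (hx i).le) hss'

/-- small-divisor estimate for the truncated homological equation
`(ω,∂_x)F = g`. If `|(k,ω)| ≥ α/K^{n+1}` for `0 < |k| ≤ K` and `g` is a trigonometric
polynomial with modes `0 < |k| ≤ K` whose coefficients satisfy `|ĝ(k)| ≤ M e^{-s|k|}`,
then the solution `F = Σ ĝ(k)/(i(k,ω)) e^{i(k,x)}` satisfies
`sup_{D(s')} |F| ≤ C α⁻¹ K^{n+1} M Σ_k e^{-(s-s')|k|}`. -/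
theorem stmt10 (n : ℕ) (hn : 0 < n) :
    ∃ C : ℝ, 0 < C ∧
      ∀ (K : ℕ) (α s s' M : ℝ) (ω : Fin n → ℝ) (gh : (Fin n → ℤ) → ℂ),
        0 < K → 0 < α → 0 < s' → s' < s → 0 ≤ M →
        (∀ k : Fin n → ℤ, k ≠ 0 → l1norm k ≤ K →
          α / (K : ℝ) ^ (n + 1) ≤ |∑ i, (k i : ℝ) * ω i|) →
        (∀ k : Fin n → ℤ, ‖gh k‖ ≤ M * Real.exp (-s * l1norm k)) →
        (∀ k : Fin n → ℤ, (k = 0 ∨ (K : ℝ) < l1norm k) → gh k = 0) →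
        ∀ x : Fin n → ℂ, (∀ i, |(x i).im| < s') →
          ‖(∑' k : Fin n → ℤ,
              if k = 0 then 0 else
                gh k / (Complex.I * ∑ i, (k i : ℂ) * (ω i : ℂ)) *
                  Complex.exp (Complex.I * ∑ i, (k i : ℂ) * x i))‖ ≤
            C * α⁻¹ * (K : ℝ) ^ (n + 1) * M *
              ∑' k : Fin n → ℤ, Real.exp (-(s - s') * l1norm k) :=
  stmt10_general n
end
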